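/- arXiv:2104.14347 — 3 statements merged into one kernel-verified Lean document; each statement's English description precedes it below -/
import Mathlib

section
/- Suppose there are two agents and m indivisible items with additive utilities. Let π and π' be picking sequences of length m such that the only difference between them is that for some 1 ≤ i ≤ m−1, agent 2 picks in the i-th turn of π and the (i+1)-st turn of π', whereas agent 1 picks in the i-th turn of π' and the (i+1)-st turn of π. Then, for any utility functions of the two agents, agent 1 receives at least as much total utility from the allocation produced by π' as from the allocation produced by π. -/
open Finset

/-- The favorite item of an agent with item-utility function `u` among a remaining
set `R` of items: a highest-valued item, ties broken in favor of the lower-numbered item. -/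
noncomputable def favorite {m : ℕ} (u : Fin m → ℝ) (R : Finset (Fin m)) : Option (Fin m) :=
  if h : (R.filter fun j => ∀ j' ∈ R, u j' ≤ u j).Nonempty then
    some ((R.filter fun j => ∀ j' ∈ R, u j' ≤ u j).min' h)
  else none

/-- One step of the picking process: agent `a` picks her favorite remaining item. -/
noncomputable def pickStep {n m : ℕ} (u : Fin n → Fin m → ℝ)
    (st : Finset (Fin m) × (Fin n → Finset (Fin m))) (a : Fin n) :
    Finset (Fin m) × (Fin n → Finset (Fin m)) :=
  match favorite (u a) st.1 with
  | none => st
  | some j => (st.1.erase j, Function.update st.2 a (insert j (st.2 a)))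

/-- The allocation produced by letting agents pick their favorite remaining items
in the order given by the picking sequence `π`. -/
noncomputable def allocate {n m : ℕ} (u : Fin n → Fin m → ℝ) (π : List (Fin n)) :
    Fin n → Finset (Fin m) :=
  (π.foldl (pickStep u) (Finset.univ, fun _ => ∅)).2

section Fav
variable {m : ℕ}

lemma favorite_isSome (u : Fin m → ℝ) {R : Finset (Fin m)} (h : R.Nonempty) :
    ∃ j, favorite u R = some j := by
  obtain ⟨x, hx, hmax⟩ := R.exists_max_image u h
  have hne : (R.filter fun j => ∀ j' ∈ R, u j' ≤ u j).Nonempty :=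
    ⟨x, Finset.mem_filter.2 ⟨hx, hmax⟩⟩
  exact ⟨_, by unfold favorite; rw [dif_pos hne]⟩

lemma favorite_mem {u : Fin m → ℝ} {R : Finset (Fin m)} {j : Fin m}
    (h : favorite u R = some j) : j ∈ R := by
  unfold favorite at h
  split at h
  · rename_i hne
    have := Finset.min'_mem _ hne
    simp only [Option.some.injEq] at h
    rw [h] at this
    exact (Finset.mem_filter.1 this).1
  · exact absurd h (by simp)

lemma favorite_le {u : Fin m → ℝ} {R : Finset (Fin m)} {j : Fin m}
    (h : favorite u R = some j) : ∀ r ∈ R, u r ≤ u j := by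
  unfold favorite at h
  split at h
  · rename_i hne
    have := Finset.min'_mem _ hne
    simp only [Option.some.injEq] at h
    rw [h] at this
    exact (Finset.mem_filter.1 this).2
  · exact absurd h (by simp)

lemma favorite_erase {u : Fin m → ℝ} {R : Finset (Fin m)} {j i : Fin m}
    (h : favorite u R = some j) (hij : i ≠ j) : favorite u (R.erase i) = some j := by
  have hjR : j ∈ R := favorite_mem h
  have hle : ∀ r ∈ R, u r ≤ u j := favorite_le h
  have hset : ((R.erase i).filter fun x => ∀ j' ∈ R.erase i, u j' ≤ u x)
      = (R.filter fun x => ∀ j' ∈ R, u j' ≤ u x).erase i := by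
    ext x
    simp only [Finset.mem_filter, Finset.mem_erase]
    constructor
    · rintro ⟨⟨hxi, hxR⟩, hmax⟩
      have hjx : u j ≤ u x := hmax j ⟨hij.symm, hjR⟩
      exact ⟨hxi, hxR, fun r hr => (hle r hr).trans hjx⟩
    · rintro ⟨hxi, hxR, hmax⟩
      exact ⟨⟨hxi, hxR⟩, fun r hr => hmax r hr.2⟩
  have hjF : j ∈ (R.filter fun x => ∀ j' ∈ R, u j' ≤ u x).erase i :=
    Finset.mem_erase.2 ⟨hij.symm, Finset.mem_filter.2 ⟨hjR, hle⟩⟩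
  have hne' : ((R.erase i).filter fun x => ∀ j' ∈ R.erase i, u j' ≤ u x).Nonempty := by
    rw [hset]; exact ⟨j, hjF⟩
  unfold favorite
  rw [dif_pos hne']
  congr 1
  have hneF : (R.filter fun x => ∀ j' ∈ R, u j' ≤ u x).Nonempty :=
    ⟨j, Finset.mem_filter.2 ⟨hjR, hle⟩⟩
  have hj_eq : (R.filter fun x => ∀ j' ∈ R, u j' ≤ u x).min' hneF = j := by
    unfold favorite at h
    rw [dif_pos hneF] at h
    exact Option.some.inj h
  have hmem' : ((R.erase i).filter fun x => ∀ j' ∈ R.erase i, u j' ≤ u x).min' hne'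
      ∈ (R.filter fun x => ∀ j' ∈ R, u j' ≤ u x).erase i := by
    rw [← hset]; exact Finset.min'_mem _ hne'
  apply le_antisymm
  · exact Finset.min'_le _ j (by rw [hset]; exact hjF)
  · rw [← hj_eq]
    exact Finset.min'_le _ _ (Finset.mem_erase.1 hmem').2

lemma favorite_of_empty (u : Fin m → ℝ) {R : Finset (Fin m)} (h : R = ∅) :
    favorite u R = none := by
  subst h; simp [favorite]

end Fav

section Steps
variable {m : ℕ} (u : Fin 2 → Fin m → ℝ)

abbrev St (m : ℕ) := Finset (Fin m) × (Fin 2 → Finset (Fin m))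

lemma fin2_eq (a : Fin 2) : a = 0 ∨ a = 1 := by
  have : ∀ b : Fin 2, b = 0 ∨ b = 1 := by decide
  exact this a

lemma pickStep_none {st : St m} {a : Fin 2} (h : favorite (u a) st.1 = none) :
    pickStep u st a = st := by
  unfold pickStep; rw [h]

lemma pickStep_some {st : St m} {a : Fin 2} {j : Fin m} (h : favorite (u a) st.1 = some j) :
    pickStep u st a = (st.1.erase j, Function.update st.2 a (insert j (st.2 a))) := by
  unfold pickStep; rw [h]

lemma disj_pickStep {st : St m} (hd : Disjoint st.1 (st.2 0)) (a : Fin 2) :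
    Disjoint (pickStep u st a).1 ((pickStep u st a).2 0) := by
  have ha := fin2_eq a
  rcases hfav : favorite (u a) st.1 with _ | j
  · rw [pickStep_none u hfav]; exact hd
  · rw [pickStep_some u hfav]
    rcases ha with rfl | rfl <;> dsimp only
    · simp only [Function.update_self]
      rw [Finset.disjoint_insert_right]
      exact ⟨Finset.notMem_erase _ _,
        Finset.disjoint_of_subset_left (Finset.erase_subset _ _) hd⟩
    · rw [Function.update_of_ne (by decide : (0 : Fin 2) ≠ 1)]
      exact Finset.disjoint_of_subset_left (Finset.erase_subset _ _) hd

def SwapInv (st st' : St m) : Prop :=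
  Disjoint st.1 (st.2 0) ∧ Disjoint st'.1 (st'.2 0) ∧
  (∑ x ∈ st.2 0, u 0 x) ≤ (∑ x ∈ st'.2 0, u 0 x) ∧
  (st.1 = st'.1 ∨
    ∃ b y, b ∈ st.1 ∧ y ∉ st.1 ∧ st'.1 = insert y (st.1.erase b) ∧
      u 0 b ≤ u 0 y ∧ favorite (u 1) st.1 = some b ∧ favorite (u 0) st'.1 = some y)

lemma inv_step {st st' : St m} (hInv : SwapInv u st st') (a : Fin 2) :
    SwapInv u (pickStep u st a) (pickStep u st' a) := by
  obtain ⟨hd, hd', hs, hcase⟩ := hInv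
  have hD := disj_pickStep u hd a
  have hD' := disj_pickStep u hd' a
  refine ⟨hD, hD', ?_⟩
  have h01 : (0 : Fin 2) ≠ 1 := by decide
  have ha := fin2_eq a
  rcases hcase with heq | ⟨b, y, hb, hy, hS, hby, hfb, hfy⟩
  · -- sets equal
    rcases hfav : favorite (u a) st.1 with _ | j
    · rw [pickStep_none u hfav, pickStep_none u (heq ▸ hfav)]
      exact ⟨hs, Or.inl heq⟩
    · have hfav' : favorite (u a) st'.1 = some j := heq ▸ hfav
      have hjR : j ∈ st.1 := favorite_mem hfav
      rw [pickStep_some u hfav, pickStep_some u hfav']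
      rcases ha with rfl | rfl <;> dsimp only
      · simp only [Function.update_self]
        constructor
        · rw [Finset.sum_insert (Finset.disjoint_left.1 hd hjR),
            Finset.sum_insert (Finset.disjoint_left.1 hd' (heq ▸ hjR))]
          linarith
        · exact Or.inl (by rw [heq])
      · simp only [Function.update_of_ne h01]
        exact ⟨hs, Or.inl (by rw [heq])⟩
  · have hyS' : y ∈ st'.1 := by rw [hS]; exact Finset.mem_insert_self _ _
    have hyeb : y ∉ st.1.erase b := fun h => hy (Finset.mem_of_mem_erase h)
    have hS'y : st'.1.erase y = st.1.erase b := by rw [hS, Finset.erase_insert hyeb]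
    rcases ha with rfl | rfl
    · -- agent 0 picks
      obtain ⟨f, hf⟩ := favorite_isSome (u 0) ⟨b, hb⟩
      have hfmem : f ∈ st.1 := favorite_mem hf
      rw [pickStep_some u hf, pickStep_some u hfy]
      dsimp only
      simp only [Function.update_self]
      constructor
      · rw [Finset.sum_insert (Finset.disjoint_left.1 hd hfmem),
          Finset.sum_insert (Finset.disjoint_left.1 hd' hyS')]
        by_cases hfbq : f = b
        · subst hfbq; linarith
        · have hfS' : f ∈ st'.1 := by
            rw [hS]; exact Finset.mem_insert_of_mem (Finset.mem_erase.2 ⟨hfbq, hfmem⟩)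
          have := favorite_le hfy f hfS'
          linarith
      · by_cases hfbq : f = b
        · subst hfbq; exact Or.inl hS'y.symm
        · refine Or.inr ⟨b, f, Finset.mem_erase.2 ⟨fun h => hfbq h.symm, hb⟩,
            Finset.notMem_erase _ _, ?_, favorite_le hf b hb, ?_, ?_⟩
          · rw [hS'y, Finset.erase_right_comm,
              Finset.insert_erase (Finset.mem_erase.2 ⟨hfbq, hfmem⟩)]
          · exact favorite_erase hfb hfbq
          · rw [hS'y]; exact favorite_erase hf (fun h => hfbq h.symm)
    · -- agent 1 picks
      obtain ⟨g, hg⟩ := favorite_isSome (u 1) ⟨y, hyS'⟩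
      have hgmem : g ∈ st'.1 := favorite_mem hg
      rw [pickStep_some u hfb, pickStep_some u hg]
      dsimp only
      simp only [Function.update_of_ne h01]
      refine ⟨hs, ?_⟩
      by_cases hgy : g = y
      · subst hgy; exact Or.inl hS'y.symm
      · have hgT : g ∈ st.1.erase b := by
          rcases Finset.mem_insert.1 (hS ▸ hgmem) with h | h
          · exact absurd h hgy
          · exact h
        refine Or.inr ⟨g, y, hgT, fun h => hy (Finset.mem_of_mem_erase h), ?_,
          favorite_le hfy g hgmem, ?_, ?_⟩
        · rw [hS, Finset.erase_insert_of_ne (fun h => hgy h.symm)]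
        · have := favorite_erase hg (fun h : y = g => hgy h.symm)
          rwa [hS'y] at this
        · exact favorite_erase hfy hgy

lemma inv_foldl {st st' : St m} (l : List (Fin 2)) (hInv : SwapInv u st st') :
    SwapInv u (l.foldl (pickStep u) st) (l.foldl (pickStep u) st') := by
  induction l generalizing st st' with
  | nil => exact hInv
  | cons a l ih => exact ih (inv_step u hInv a)

lemma disj_foldl {st : St m} (l : List (Fin 2)) (hd : Disjoint st.1 (st.2 0)) :
    Disjoint ((l.foldl (pickStep u) st).1) ((l.foldl (pickStep u) st).2 0) := by
  induction l generalizing st with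
  | nil => exact hd
  | cons a l ih => exact ih (disj_pickStep u hd a)

lemma inv_init {st : St m} (hu : ∀ i j, 0 ≤ u i j) (hd : Disjoint st.1 (st.2 0)) :
    SwapInv u (pickStep u (pickStep u st 1) 0) (pickStep u (pickStep u st 0) 1) := by
  have h01 : (0 : Fin 2) ≠ 1 := by decide
  refine ⟨disj_pickStep u (disj_pickStep u hd 1) 0,
    disj_pickStep u (disj_pickStep u hd 0) 1, ?_⟩
  rcases st.1.eq_empty_or_nonempty with hE | hR
  · have h1 : pickStep u st 1 = st := pickStep_none u (favorite_of_empty _ hE)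
    have h0 : pickStep u st 0 = st := pickStep_none u (favorite_of_empty _ hE)
    simp only [h0, h1]
    exact ⟨le_refl _, Or.inl trivial⟩
  · obtain ⟨x, hfx⟩ := favorite_isSome (u 1) hR
    obtain ⟨a0, hfa⟩ := favorite_isSome (u 0) hR
    have e1 := pickStep_some u hfx
    have e0 := pickStep_some u hfa
    have hxR : x ∈ st.1 := favorite_mem hfx
    rcases (st.1.erase x).eq_empty_or_nonempty with hE' | hR'
    · have hax : a0 = x := by
        by_contra hne
        have : a0 ∈ st.1.erase x := Finset.mem_erase.2 ⟨hne, favorite_mem hfa⟩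
        rw [hE'] at this
        exact absurd this (Finset.notMem_empty _)
      rw [hax] at e0 hfa
      have h2 : pickStep u (pickStep u st 1) 0 = pickStep u st 1 :=
        pickStep_none u (by rw [e1]; exact favorite_of_empty _ hE')
      have h2' : pickStep u (pickStep u st 0) 1 = pickStep u st 0 :=
        pickStep_none u (by rw [e0]; exact favorite_of_empty _ hE')
      rw [h2, h2', e1, e0]
      dsimp only
      constructor
      · rw [Function.update_of_ne h01, Function.update_self,
          Finset.sum_insert (Finset.disjoint_left.1 hd hxR)]
        have := hu 0 x
        linarith
      · exact Or.inl rfl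
    · by_cases hax : a0 = x
      · rw [hax] at e0 hfa
        obtain ⟨y, hfy⟩ := favorite_isSome (u 0) hR'
        obtain ⟨b, hfb⟩ := favorite_isSome (u 1) hR'
        have f1 : favorite (u 0) (pickStep u st 1).1 = some y := by rw [e1]; exact hfy
        have f2 : favorite (u 1) (pickStep u st 0).1 = some b := by rw [e0]; exact hfb
        rw [pickStep_some u f1, pickStep_some u f2]
        dsimp only
        have b1 : (pickStep u st 1).2 0 = st.2 0 := by
          rw [e1]; dsimp only; exact Function.update_of_ne h01 _ _
        have b0 : (pickStep u st 0).2 0 = insert x (st.2 0) := by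
          rw [e0]; dsimp only; exact Function.update_self _ _ _
        have s1 : (pickStep u st 1).1 = st.1.erase x := by rw [e1]
        have s0 : (pickStep u st 0).1 = st.1.erase x := by rw [e0]
        have hyR : y ∈ st.1 := Finset.mem_of_mem_erase (favorite_mem hfy)
        constructor
        · rw [Function.update_self, Function.update_of_ne h01, b1, b0,
            Finset.sum_insert (Finset.disjoint_left.1 hd hyR),
            Finset.sum_insert (Finset.disjoint_left.1 hd hxR)]
          have := favorite_le hfa y hyR
          linarith
        · rw [s1, s0]
          by_cases hby : b = y
          · subst hby; exact Or.inl rfl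
          · refine Or.inr ⟨b, y, Finset.mem_erase.2 ⟨hby, favorite_mem hfb⟩,
              Finset.notMem_erase _ _, ?_,
              favorite_le hfy b (favorite_mem hfb), ?_, ?_⟩
            · rw [Finset.erase_right_comm (a := y) (b := b),
                Finset.insert_erase (Finset.mem_erase.2
                  ⟨fun h => hby h.symm, favorite_mem hfy⟩)]
            · exact favorite_erase hfb (fun h => hby h.symm)
            · exact favorite_erase hfy hby
      · have f1 : favorite (u 0) (pickStep u st 1).1 = some a0 := by
          rw [e1]; exact favorite_erase hfa (fun h => hax h.symm)
        have f2 : favorite (u 1) (pickStep u st 0).1 = some x := by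
          rw [e0]; exact favorite_erase hfx hax
        rw [pickStep_some u f1, pickStep_some u f2]
        dsimp only
        have b1 : (pickStep u st 1).2 0 = st.2 0 := by
          rw [e1]; dsimp only; exact Function.update_of_ne h01 _ _
        have b0 : (pickStep u st 0).2 0 = insert a0 (st.2 0) := by
          rw [e0]; dsimp only; exact Function.update_self _ _ _
        have s1 : (pickStep u st 1).1 = st.1.erase x := by rw [e1]
        have s0 : (pickStep u st 0).1 = st.1.erase a0 := by rw [e0]
        constructor
        · rw [Function.update_self, Function.update_of_ne h01, b1, b0]
        · rw [s1, s0]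
          exact Or.inl (Finset.erase_right_comm)

end Steps


/-- Two agents (agent 1 is `0`, agent 2 is `1`). If `π` and `π'` are
picking sequences of length `m` whose only difference is that, for some
`k` with `k + 1 < m`, agent 2 picks in turn `k` of `π` and in turn `k + 1` of `π'`,
whereas agent 1 picks in turn `k` of `π'` and in turn `k + 1` of `π`, then for any
utility functions agent 1 receives at least as much total utility from the
allocation produced by `π'` as from the allocation produced by `π`. -/
theorem adjacent_swap_helps_agent_one
    (m : ℕ) (u : Fin 2 → Fin m → ℝ) (hu : ∀ i j, 0 ≤ u i j)
    (π π' : List (Fin 2)) (hlen : π.length = m) (hlen' : π'.length = m)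
    (k : ℕ) (hk : k + 1 < m)
    (h1 : π.get ⟨k, by omega⟩ = 1) (h2 : π.get ⟨k + 1, by omega⟩ = 0)
    (h3 : π'.get ⟨k, by omega⟩ = 0) (h4 : π'.get ⟨k + 1, by omega⟩ = 1)
    (h5 : ∀ (j : ℕ) (hj : j < m), j ≠ k → j ≠ k + 1 →
      π.get ⟨j, by omega⟩ = π'.get ⟨j, by omega⟩) :
    (∑ x ∈ allocate u π 0, u 0 x) ≤ ∑ x ∈ allocate u π' 0, u 0 x := by
  have hkl : k < π.length := by omega
  have hkl1 : k + 1 < π.length := by omega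
  have hkl' : k < π'.length := by omega
  have hkl1' : k + 1 < π'.length := by omega
  have e1 : π[k]'hkl = 1 := h1
  have e2 : π[k+1]'hkl1 = 0 := h2
  have e3 : π'[k]'hkl' = 0 := h3
  have e4 : π'[k+1]'hkl1' = 1 := h4
  have hπd : π.drop k = 1 :: (0 : Fin 2) :: π.drop (k+2) := by
    rw [List.drop_eq_getElem_cons hkl, List.drop_eq_getElem_cons hkl1, e1, e2]
  have hπ'd : π'.drop k = (0 : Fin 2) :: 1 :: π'.drop (k+2) := by
    rw [List.drop_eq_getElem_cons hkl', List.drop_eq_getElem_cons hkl1', e3, e4]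
  have htake : π.take k = π'.take k := by
    apply List.ext_getElem
    · simp [hlen, hlen']
    · intro n h₁ h₂
      rw [List.getElem_take, List.getElem_take]
      have hnk : n < k := by simp [List.length_take, hlen] at h₁; omega
      have := h5 n (by omega) (by omega) (by omega)
      exact this
  have hdrop : π.drop (k+2) = π'.drop (k+2) := by
    apply List.ext_getElem
    · simp [hlen, hlen']
    · intro n h₁ h₂
      rw [List.getElem_drop, List.getElem_drop]
      have hn : k + 2 + n < m := by simp [List.length_drop, hlen] at h₁; omega
      have := h5 (k+2+n) (by omega) (by omega) (by omega)
      exact this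
  have hπ : π = π.take k ++ (1 :: (0 : Fin 2) :: π.drop (k+2)) := by
    rw [← hπd, List.take_append_drop]
  have hπ' : π' = π.take k ++ ((0 : Fin 2) :: 1 :: π.drop (k+2)) := by
    rw [htake, hdrop, ← hπ'd, List.take_append_drop]
  have hd0 : Disjoint ((π.take k).foldl (pickStep u)
      ((Finset.univ : Finset (Fin m)), fun _ => (∅ : Finset (Fin m)))).1
      (((π.take k).foldl (pickStep u)
      ((Finset.univ : Finset (Fin m)), fun _ => (∅ : Finset (Fin m)))).2 0) :=
    disj_foldl u _ (by simp)
  have key := inv_foldl u (π.drop (k+2)) (inv_init u hu hd0)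
  obtain ⟨_, _, hsum, _⟩ := key
  have hA : allocate u π 0 = ((π.drop (k+2)).foldl (pickStep u)
      (pickStep u (pickStep u ((π.take k).foldl (pickStep u)
        ((Finset.univ : Finset (Fin m)), fun _ => (∅ : Finset (Fin m)))) 1) 0)).2 0 := by
    unfold allocate
    conv_lhs => rw [hπ]
    rw [List.foldl_append, List.foldl_cons, List.foldl_cons]
  have hA' : allocate u π' 0 = ((π.drop (k+2)).foldl (pickStep u)
      (pickStep u (pickStep u ((π.take k).foldl (pickStep u)
        ((Finset.univ : Finset (Fin m)), fun _ => (∅ : Finset (Fin m)))) 0) 1)).2 0 := by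
    unfold allocate
    conv_lhs => rw [hπ']
    rw [List.foldl_append, List.foldl_cons, List.foldl_cons]
  rw [hA, hA']
  exact hsum
end

section
/- Every divisor method satisfies resource-monotonicity (adding an extra item never decreases any agent's utility in the produced allocation) and population-monotonicity (adding an extra agent never increases the utility of any of the original agents in the produced allocation); moreover, when there are two agents, every divisor method satisfies weight-monotonicity (increasing an agent's weight never decreases that agent's utility in the produced allocation). -/
open Finset

/-- A divisor method is given by a strictly increasing `f : ℕ → ℝ` with `t ≤ f t ≤ t + 1`. -/
def IsDivisorFn (f : ℕ → ℝ) : Prop :=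
  StrictMono f ∧ ∀ t : ℕ, (t : ℝ) ≤ f t ∧ f t ≤ t + 1

/-- `π` is the picking sequence induced by the divisor method with function `f` and
weights `w`: each pick goes to an agent minimizing `f t_i / w_i` (where `t_i` is the
number of picks agent `i` has received so far), ties broken toward lower-numbered agents. -/
def IsDivisorSeq {n : ℕ} (f : ℕ → ℝ) (w : Fin n → ℝ) (π : List (Fin n)) : Prop :=
  ∀ (k : ℕ) (hk : k < π.length) (i : Fin n),
    f ((π.take k).count (π.get ⟨k, hk⟩)) / w (π.get ⟨k, hk⟩) ≤
      f ((π.take k).count i) / w i ∧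
    (i < π.get ⟨k, hk⟩ →
      f ((π.take k).count (π.get ⟨k, hk⟩)) / w (π.get ⟨k, hk⟩) <
        f ((π.take k).count i) / w i)

/-!
Everything is reduced to `pickUtility u i σ R`, the utility agent `i` collects when the agents
pick in the order `σ` from the pool `R`. A divisor sequence is determined turn by turn by the
earlier turns, so one more item only appends a turn to the sequence, and after deleting the
turns of an extra agent the new sequence is a prefix of the old one. Appending turns, adding an
item to the pool, and deleting the turns of other agents never hurt `i`.

For two agents, raising `w i` gives `i` at least as many of the first `k` turns, for every `k`.
Such a sequence arises by moving turns of `i` forward past turns of `j`, and each swap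
`j i ↦ i j` helps `i`: if both want the same item, `i` now gets it instead of her second choice.
-/

section Favorite

variable {m : ℕ} {u : Fin m → ℝ} {R S : Finset (Fin m)} {g z : Fin m}

theorem favorite_eq_some_iff :
    favorite u R = some g ↔
      g ∈ R ∧ (∀ z ∈ R, u z ≤ u g) ∧ ∀ y ∈ R, (∀ z ∈ R, u z ≤ u y) → g ≤ y := by
  unfold favorite
  split_ifs with hne
  · rw [Option.some_inj]
    constructor
    · rintro rfl
      obtain ⟨hmem, hmax⟩ := mem_filter.mp (min'_mem _ hne)
      exact ⟨hmem, hmax, fun y hy hymax => min'_le _ _ (mem_filter.mpr ⟨hy, hymax⟩)⟩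
    · rintro ⟨hg, hgmax, hgmin⟩
      obtain ⟨hmem, hmax⟩ := mem_filter.mp (min'_mem _ hne)
      exact le_antisymm (min'_le _ _ (mem_filter.mpr ⟨hg, hgmax⟩)) (hgmin _ hmem hmax)
  · simp only [false_iff, not_and]
    exact fun hg hgmax _ => hne ⟨g, mem_filter.mpr ⟨hg, hgmax⟩⟩

theorem favorite_mem_s7 (hg : favorite u R = some g) : g ∈ R :=
  (favorite_eq_some_iff.mp hg).1

theorem le_favorite (hg : favorite u R = some g) (hz : z ∈ R) : u z ≤ u g :=
  (favorite_eq_some_iff.mp hg).2.1 z hz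

theorem favorite_eq_none : favorite u R = none ↔ R = ∅ := by
  unfold favorite
  split_ifs with hne
  · simpa using (hne.mono (filter_subset _ _)).ne_empty
  · simp only [true_iff]
    by_contra hR
    obtain ⟨g, hg, hgmax⟩ := exists_max_image R u (nonempty_iff_ne_empty.mpr hR)
    exact hne ⟨g, mem_filter.mpr ⟨hg, hgmax⟩⟩

theorem exists_favorite_eq_some (hR : R.Nonempty) : ∃ g, favorite u R = some g :=
  Option.ne_none_iff_exists'.mp (favorite_eq_none.not.mpr hR.ne_empty)

theorem favorite_of_subset (hg : favorite u R = some g) (hSR : S ⊆ R) (hgS : g ∈ S) :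
    favorite u S = some g := by
  rw [favorite_eq_some_iff] at hg ⊢
  obtain ⟨-, hgmax, hgmin⟩ := hg
  exact ⟨hgS, fun z hz => hgmax z (hSR hz),
    fun y hy hymax => hgmin y (hSR hy) fun z hz => (hgmax z hz).trans (hymax g hgS)⟩

theorem favorite_insert (hg : favorite u R = some g) (d : Fin m) :
    favorite u (insert d R) = some d ∨ favorite u (insert d R) = some g := by
  obtain ⟨y, hy⟩ := exists_favorite_eq_some (insert_nonempty d R) (u := u)
  rcases mem_insert.mp (favorite_mem_s7 hy) with rfl | hyR
  · exact Or.inl hy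
  · rw [Option.some_inj.mp (hg.symm.trans (favorite_of_subset hy (subset_insert d R) hyR))]
    exact Or.inr hy

theorem erase_favorite_subset {g' : Fin m} (hg : favorite u R = some g)
    (hg' : favorite u S = some g') (hSR : S ⊆ R) : S.erase g' ⊆ R.erase g := by
  by_cases hgS : g ∈ S
  · rw [Option.some_inj.mp (hg'.symm.trans (favorite_of_subset hg hSR hgS))]
    exact erase_subset_erase g hSR
  · exact fun z hz => mem_erase.mpr
      ⟨fun hzg => hgS (hzg ▸ mem_of_mem_erase hz), hSR (mem_of_mem_erase hz)⟩

theorem favorite_map {m' : ℕ} (u : Fin m' → ℝ) (e : Fin m ↪o Fin m') (R : Finset (Fin m)) :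
    favorite u (R.map e.toEmbedding) = (favorite (u ∘ e) R).map e := by
  rcases hR : favorite (u ∘ e) R with - | g
  · rw [favorite_eq_none] at hR
    simp [hR, favorite_eq_none]
  · rw [favorite_eq_some_iff] at hR
    obtain ⟨hg, hgmax, hgmin⟩ := hR
    simp only [Option.map_some, favorite_eq_some_iff, mem_map, forall_exists_index, and_imp,
      RelEmbedding.coe_toEmbedding, forall_apply_eq_imp_iff₂]
    exact ⟨⟨g, hg, rfl⟩, hgmax, fun y hy hymax => e.le_iff_le.mpr (hgmin y hy hymax)⟩

end Favorite

noncomputable def pickUtility {n m : ℕ} (u : Fin n → Fin m → ℝ) (i : Fin n) :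
    List (Fin n) → Finset (Fin m) → ℝ
  | [], _ => 0
  | a :: σ, R =>
    match favorite (u a) R with
    | none => pickUtility u i σ R
    | some g => (if a = i then u i g else 0) + pickUtility u i σ (R.erase g)

section PickUtility

variable {n m : ℕ} {u : Fin n → Fin m → ℝ} {i a : Fin n} {R S : Finset (Fin m)} {g : Fin m}
  {σ τ : List (Fin n)}

@[simp] theorem pickUtility_nil : pickUtility u i [] R = 0 := rfl

theorem pickUtility_cons_of_favorite_eq_none (h : favorite (u a) R = none) :
    pickUtility u i (a :: σ) R = pickUtility u i σ R := by
  rw [pickUtility, h]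

theorem pickUtility_cons_of_favorite_eq_some (h : favorite (u a) R = some g) :
    pickUtility u i (a :: σ) R =
      (if a = i then u i g else 0) + pickUtility u i σ (R.erase g) := by
  rw [pickUtility, h]

@[simp] theorem pickUtility_empty : pickUtility u i σ ∅ = 0 := by
  induction σ with
  | nil => rfl
  | cons a σ ih => rwa [pickUtility_cons_of_favorite_eq_none (favorite_eq_none.mpr rfl)]

theorem pickUtility_nonneg (hu : ∀ x, 0 ≤ u i x) (σ : List (Fin n)) (R : Finset (Fin m)) :
    0 ≤ pickUtility u i σ R := by
  induction σ generalizing R with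
  | nil => rfl
  | cons a σ ih =>
    rcases hR : favorite (u a) R with - | g
    · rw [pickUtility_cons_of_favorite_eq_none hR]
      exact ih R
    · rw [pickUtility_cons_of_favorite_eq_some hR]
      exact add_nonneg (by split_ifs <;> simp [hu]) (ih _)

theorem pickUtility_eq_zero_of_notMem (hi : i ∉ σ) (R : Finset (Fin m)) :
    pickUtility u i σ R = 0 := by
  induction σ generalizing R with
  | nil => rfl
  | cons a σ ih =>
    rw [List.mem_cons, not_or] at hi
    rcases hR : favorite (u a) R with - | g
    · rw [pickUtility_cons_of_favorite_eq_none hR, ih hi.2]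
    · rw [pickUtility_cons_of_favorite_eq_some hR, if_neg (Ne.symm hi.1), ih hi.2, add_zero]

theorem pickUtility_cons_le_cons (h : ∀ R, pickUtility u i σ R ≤ pickUtility u i τ R)
    (a : Fin n) (R : Finset (Fin m)) : pickUtility u i (a :: σ) R ≤ pickUtility u i (a :: τ) R := by
  rcases hR : favorite (u a) R with - | g
  · simpa only [pickUtility_cons_of_favorite_eq_none hR] using h R
  · simpa only [pickUtility_cons_of_favorite_eq_some hR, add_le_add_iff_left] using h _

theorem pickUtility_le_of_isPrefix (hu : ∀ x, 0 ≤ u i x) (hστ : σ <+: τ) (R : Finset (Fin m)) :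
    pickUtility u i σ R ≤ pickUtility u i τ R := by
  obtain ⟨ρ, rfl⟩ := hστ
  induction σ generalizing R with
  | nil => exact pickUtility_nonneg hu ρ R
  | cons a σ ih => exact pickUtility_cons_le_cons ih a R

/-- The first agent to pick the extra item leaves her old choice behind, which plays the role of
the extra item from then on. -/
theorem pickUtility_le_insert (hu : ∀ x, 0 ≤ u i x) (σ : List (Fin n)) {d : Fin m}
    (hd : d ∉ R) : pickUtility u i σ R ≤ pickUtility u i σ (insert d R) := by
  induction σ generalizing R d with
  | nil => rfl
  | cons a σ ih =>
    rcases hR : favorite (u a) R with - | g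
    · rw [favorite_eq_none.mp hR, pickUtility_empty]
      exact pickUtility_nonneg hu _ _
    have hgR := favorite_mem_s7 hR
    rw [pickUtility_cons_of_favorite_eq_some hR]
    rcases favorite_insert hR d with hd' | hg'
    · rw [pickUtility_cons_of_favorite_eq_some hd', erase_insert hd]
      gcongr
      · split_ifs with hai
        · exact le_favorite (hai ▸ hd') (mem_insert_of_mem hgR)
        · rfl
      · simpa only [insert_erase hgR] using ih (notMem_erase g R)
    · rw [pickUtility_cons_of_favorite_eq_some hg',
        erase_insert_of_ne (ne_of_mem_of_not_mem hgR hd).symm]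
      gcongr
      exact ih fun hd' => hd (mem_of_mem_erase hd')

/-- The invariant is that the pool of the run without the deleted picks contains the other. -/
theorem pickUtility_le_filter (hu : ∀ x, 0 ≤ u i x) {p : Fin n → Bool} (hp : p i)
    (σ : List (Fin n)) (hSR : S ⊆ R) :
    pickUtility u i σ S ≤ pickUtility u i (σ.filter p) R := by
  induction σ generalizing R S with
  | nil => rfl
  | cons a σ ih =>
    rcases hS : favorite (u a) S with - | g'
    · rw [favorite_eq_none.mp hS, pickUtility_empty]
      exact pickUtility_nonneg hu _ _
    rw [pickUtility_cons_of_favorite_eq_some hS]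
    by_cases hpa : p a
    · obtain ⟨g, hR⟩ := exists_favorite_eq_some ⟨g', hSR (favorite_mem_s7 hS)⟩ (u := u a)
      rw [List.filter_cons_of_pos hpa, pickUtility_cons_of_favorite_eq_some hR]
      gcongr
      · split_ifs with hai
        · exact le_favorite (hai ▸ hR) (hSR (favorite_mem_s7 hS))
        · rfl
      · exact ih (erase_favorite_subset hR hS hSR)
    · have hai : a ≠ i := fun hai => hpa (hai ▸ hp)
      rw [List.filter_cons_of_neg hpa, if_neg hai, zero_add]
      exact ih ((erase_subset g' S).trans hSR)

theorem pickUtility_comp_orderEmbedding {m' : ℕ} (u : Fin n → Fin m' → ℝ)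
    (e : Fin m ↪o Fin m') (i : Fin n) (σ : List (Fin n)) (R : Finset (Fin m)) :
    pickUtility (fun a y => u a (e y)) i σ R = pickUtility u i σ (R.map e.toEmbedding) := by
  induction σ generalizing R with
  | nil => rfl
  | cons a σ ih =>
    have hmap := favorite_map (u a) e R
    rcases hR : favorite (u a ∘ e) R with - | g
    · rw [hR, Option.map_none] at hmap
      rw [pickUtility_cons_of_favorite_eq_none hR, pickUtility_cons_of_favorite_eq_none hmap, ih]
    · rw [hR, Option.map_some] at hmap
      rw [pickUtility_cons_of_favorite_eq_some hR, pickUtility_cons_of_favorite_eq_some hmap, ih,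
        map_erase]
      rfl

theorem pickUtility_comp_injective {n' : ℕ} (u : Fin n' → Fin m → ℝ) {e : Fin n → Fin n'}
    (he : Function.Injective e) (i : Fin n) (σ : List (Fin n)) (R : Finset (Fin m)) :
    pickUtility (fun a => u (e a)) i σ R = pickUtility u (e i) (σ.map e) R := by
  induction σ generalizing R with
  | nil => rfl
  | cons a σ ih =>
    rcases hR : favorite (u (e a)) R with - | g
    · rw [pickUtility_cons_of_favorite_eq_none (u := fun a => u (e a)) hR, List.map_cons,
        pickUtility_cons_of_favorite_eq_none hR, ih]
    · rw [pickUtility_cons_of_favorite_eq_some (u := fun a => u (e a)) hR, List.map_cons,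
        pickUtility_cons_of_favorite_eq_some hR, ih]
      simp only [he.eq_iff]

theorem sum_foldl_pickStep (σ : List (Fin n)) (st : Finset (Fin m) × (Fin n → Finset (Fin m)))
    (hst : Disjoint (st.2 i) st.1) :
    ∑ x ∈ (σ.foldl (pickStep u) st).2 i, u i x =
      ∑ x ∈ st.2 i, u i x + pickUtility u i σ st.1 := by
  induction σ generalizing st with
  | nil => simp
  | cons a σ ih =>
    rw [List.foldl_cons]
    rcases hfav : favorite (u a) st.1 with - | g
    · rw [pickStep, hfav, pickUtility_cons_of_favorite_eq_none hfav, ih st hst]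
    rw [pickStep, hfav, pickUtility_cons_of_favorite_eq_some hfav]
    by_cases hai : a = i
    · subst hai
      have hg : g ∉ st.2 a := disjoint_right.mp hst (favorite_mem_s7 hfav)
      rw [ih _ (by simpa using hst.mono_right (erase_subset g st.1))]
      simp [sum_insert hg, add_assoc, add_left_comm]
    · have hupd : Function.update st.2 a (insert g (st.2 a)) i = st.2 i :=
        Function.update_of_ne (Ne.symm hai) _ _
      rw [ih _ (by simpa [hupd] using hst.mono_right (erase_subset g st.1))]
      simp [hupd, hai]

theorem sum_allocate_eq_pickUtility (u : Fin n → Fin m → ℝ) (π : List (Fin n)) (i : Fin n) :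
    ∑ x ∈ allocate u π i, u i x = pickUtility u i π univ := by
  rw [allocate]
  simpa using sum_foldl_pickStep π (univ, fun _ => ∅) (disjoint_empty_left univ)

end PickUtility

theorem List.isPrefix_of_take_eq_imp_getElem_eq {α : Type*} {l l' : List α}
    (hlen : l.length ≤ l'.length)
    (h : ∀ k (hk : k < l.length) (hk' : k < l'.length), l.take k = l'.take k → l[k] = l'[k]) :
    l <+: l' := by
  have htake : ∀ k ≤ l.length, l.take k = l'.take k := by
    intro k hk
    induction k with
    | zero => simp
    | succ k ih =>
      have hk' : k < l'.length := by omega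
      rw [List.take_add_one, List.take_add_one, List.getElem?_eq_getElem hk',
        List.getElem?_eq_getElem (by omega : k < l.length), ih (by omega),
        h k _ hk' (ih (by omega))]
  rw [List.prefix_iff_eq_take]
  simpa using htake _ le_rfl

theorem List.count_take_erase {α : Type*} [DecidableEq α] (a : α) (l : List α) (k : ℕ) :
    ((l.erase a).take k).count a = (l.take (k + 1)).count a - 1 := by
  induction l generalizing k with
  | nil => simp
  | cons b l ih =>
    by_cases hba : b = a
    · subst hba
      simp
    · rw [List.erase_cons_tail (by simpa using hba)]
      cases k with
      | zero => simp [hba]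
      | succ k => simp [hba, ih]

section DivisorSeq

variable {n k : ℕ} {f : ℕ → ℝ}

/-- Ties are broken by the index, read in `ℕ` so that priorities of agents in `Fin n` and in
`Fin (n + 1)` can be compared. -/
noncomputable def divisorPriority (f : ℕ → ℝ) (w : Fin n → ℝ) (σ : List (Fin n)) (a : Fin n) :
    ℝ ×ₗ ℕ :=
  toLex (f (σ.count a) / w a, a)

theorem divisorPriority_injective (w : Fin n → ℝ) (σ : List (Fin n)) :
    Function.Injective (divisorPriority f w σ) :=
  fun _ _ h => Fin.ext (congrArg (fun p => (ofLex p).2) h)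

theorem IsDivisorSeq.divisorPriority_le {w : Fin n → ℝ} {π : List (Fin n)}
    (hs : IsDivisorSeq f w π) (hk : k < π.length) (a : Fin n) :
    divisorPriority f w (π.take k) π[k] ≤ divisorPriority f w (π.take k) a := by
  obtain ⟨hle, hlt⟩ := hs k hk a
  simp only [List.get_eq_getElem] at hle hlt
  rw [divisorPriority, divisorPriority, Prod.Lex.toLex_le_toLex]
  rcases hle.lt_or_eq with hlt' | heq
  · exact Or.inl hlt'
  · exact Or.inr ⟨heq, Fin.val_le_of_le (not_lt.mp fun ha => (hlt ha).ne heq)⟩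

theorem IsDivisorSeq.isPrefix {w : Fin n → ℝ} {π π' : List (Fin n)} (hs : IsDivisorSeq f w π)
    (hs' : IsDivisorSeq f w π') (hlen : π.length ≤ π'.length) : π <+: π' := by
  refine List.isPrefix_of_take_eq_imp_getElem_eq hlen fun k hk hk' htake => ?_
  refine divisorPriority_injective w (π'.take k) (le_antisymm ?_ (hs'.divisorPriority_le hk' _))
  simpa only [htake] using hs.divisorPriority_le hk π'[k]

theorem divisorPriority_castSucc {w : Fin (n + 1) → ℝ} {σ' : List (Fin (n + 1))}
    {σ : List (Fin n)} {a : Fin n} (h : σ'.count a.castSucc = σ.count a) :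
    divisorPriority f w σ' a.castSucc = divisorPriority f (fun b => w b.castSucc) σ a := by
  simp [divisorPriority, h]

theorem IsDivisorSeq.filter_ne_last_isPrefix {w : Fin (n + 1) → ℝ} {π : List (Fin n)}
    {π' : List (Fin (n + 1))} (hs : IsDivisorSeq f (fun a => w a.castSucc) π)
    (hs' : IsDivisorSeq f w π') (hlen : π'.length ≤ π.length) :
    π'.filter (· ≠ Fin.last n) <+: π.map Fin.castSucc := by
  suffices h : ∀ k, (π'.take k).filter (· ≠ Fin.last n) <+: π.map Fin.castSucc by
    simpa using h π'.length
  intro k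
  induction k with
  | zero => simp
  | succ k ih =>
    rw [List.take_add_one, List.filter_append]
    rcases hb : π'[k]? with - | b
    · simpa using ih
    obtain ⟨hk, rfl⟩ := List.getElem?_eq_some_iff.mp hb
    by_cases hlast : π'[k] = Fin.last n
    · simpa [hlast] using ih
    set F := (π'.take k).filter (· ≠ Fin.last n)
    have hF : F = (π.take F.length).map Fin.castSucc := by
      rw [List.map_take]
      exact List.prefix_iff_eq_take.mp ih
    have hL : F.length < π.length :=
      calc F.length ≤ (π'.take k).length := List.length_filter_le _ _
        _ ≤ k := List.length_take_le _ _
        _ < π.length := by omega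
    have hcount (a : Fin n) : (π'.take k).count a.castSucc = (π.take F.length).count a := by
      rw [← List.count_filter (p := (· ≠ Fin.last n)) (by simp [Fin.castSucc_ne_last])]
      change F.count a.castSucc = _
      conv_lhs => rw [hF]
      exact List.count_map_of_injective _ _ (Fin.castSucc_injective n) _
    have hpick : π[F.length].castSucc = π'[k] := by
      rw [← Fin.castSucc_castPred _ hlast]
      congr 1
      refine divisorPriority_injective _ (π.take F.length)
        (le_antisymm (hs.divisorPriority_le hL _) ?_)
      have := hs'.divisorPriority_le hk π[F.length].castSucc
      rwa [← Fin.castSucc_castPred _ hlast, divisorPriority_castSucc (hcount _),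
        divisorPriority_castSucc (hcount _)] at this
    have hnext : F ++ [π'[k]] = (π.take (F.length + 1)).map Fin.castSucc := by
      rw [List.take_add_one, List.getElem?_eq_getElem hL, List.map_append, ← hF]
      simp [hpick]
    simpa [hlast, hnext] using (List.take_prefix _ π).map Fin.castSucc

end DivisorSeq

section TwoAgents

variable {i j : Fin 2}

theorem Fin.two_eq_or_eq_of_ne (hji : j ≠ i) (a : Fin 2) : a = i ∨ a = j := by
  omega

theorem List.count_add_count_fin_two (hji : j ≠ i) (l : List (Fin 2)) :
    l.count i + l.count j = l.length := by
  induction l with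
  | nil => rfl
  | cons a l ih =>
    rcases Fin.two_eq_or_eq_of_ne hji a with rfl | rfl <;>
      simp [hji, hji.symm] <;> omega

theorem IsDivisorSeq.count_take_le {f : ℕ → ℝ} (hf : ∀ t, 0 ≤ f t) {w w' : Fin 2 → ℝ}
    (hji : j ≠ i) (hwi₀ : 0 < w i) (hwi : w i ≤ w' i) (hwj : w' j = w j) {π π' : List (Fin 2)}
    (hs : IsDivisorSeq f w π) (hs' : IsDivisorSeq f w' π') (hlen : π.length = π'.length)
    (k : ℕ) : (π.take k).count i ≤ (π'.take k).count i := by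
  induction k with
  | zero => simp
  | succ k ih =>
    rw [List.take_add_one, List.take_add_one, List.count_append, List.count_append]
    by_cases hk : k < π.length
    swap
    · simpa [List.getElem?_eq_none (not_lt.mp hk), List.getElem?_eq_none (hlen ▸ not_lt.mp hk)]
        using ih
    have hk' : k < π'.length := hlen ▸ hk
    suffices hpick : (π.take k).count i = (π'.take k).count i → π[k] = i → π'[k] = i by
      rw [List.getElem?_eq_getElem hk, List.getElem?_eq_getElem hk']
      simp only [Option.toList_some, List.count_singleton, beq_iff_eq]
      split_ifs with hi hi'
      · omega
      · have := mt (hpick · hi) hi'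
        omega
      all_goals omega
    intro hcount hi
    by_contra hj
    replace hj : π'[k] = j := (Fin.two_eq_or_eq_of_ne hji _).resolve_left hj
    have hcount_j : (π.take k).count j = (π'.take k).count j := by
      have := List.count_add_count_fin_two hji (π.take k)
      have := List.count_add_count_fin_two hji (π'.take k)
      simp only [List.length_take] at *
      omega
    have hi_le : divisorPriority f w (π.take k) i ≤ divisorPriority f w (π.take k) j :=
      hi ▸ hs.divisorPriority_le hk j
    have hj_le : divisorPriority f w' (π'.take k) j ≤ divisorPriority f w' (π'.take k) i :=
      hj ▸ hs'.divisorPriority_le hk' i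
    have hi_mono : divisorPriority f w' (π'.take k) i ≤ divisorPriority f w (π.take k) i :=
      Prod.Lex.toLex_mono ⟨by simpa [hcount] using div_le_div_of_nonneg_left (hf _) hwi₀ hwi,
        le_rfl⟩
    have hj_eq : divisorPriority f w' (π'.take k) j = divisorPriority f w (π.take k) j := by
      simp [divisorPriority, hwj, hcount_j]
    exact hji (divisorPriority_injective w' (π'.take k)
      (le_antisymm hj_le (hi_mono.trans (hi_le.trans hj_eq.ge))))

variable {m : ℕ} {u : Fin 2 → Fin m → ℝ}

/-- Whoever picks first takes her favorite from both pools, and the two remaining pools again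
differ only in `i`'s favorite against `j`'s favorite. -/
theorem pickUtility_erase_le_erase (hji : j ≠ i) (σ : List (Fin 2)) {P : Finset (Fin m)}
    {x d : Fin m} (hx : favorite (u i) P = some x) (hd : favorite (u j) P = some d) :
    pickUtility u i σ (P.erase x) ≤ pickUtility u i σ (P.erase d) := by
  induction σ generalizing P x d with
  | nil => rfl
  | cons a σ ih =>
    rcases eq_or_ne x d with rfl | hxd
    · rfl
    have hxP : x ∈ P.erase d := mem_erase.mpr ⟨hxd, favorite_mem_s7 hx⟩
    have hdP : d ∈ P.erase x := mem_erase.mpr ⟨hxd.symm, favorite_mem_s7 hd⟩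
    rcases Fin.two_eq_or_eq_of_ne hji a with rfl | rfl
    · obtain ⟨y, hy⟩ := exists_favorite_eq_some ⟨d, hdP⟩ (u := u a)
      rw [pickUtility_cons_of_favorite_eq_some hy,
        pickUtility_cons_of_favorite_eq_some (favorite_of_subset hx (erase_subset d P) hxP),
        if_pos rfl, if_pos rfl, erase_right_comm (s := P) (a := d)]
      exact add_le_add (le_favorite hx (mem_of_mem_erase (favorite_mem_s7 hy)))
        (ih hy (favorite_of_subset hd (erase_subset x P) hdP))
    · obtain ⟨y, hy⟩ := exists_favorite_eq_some ⟨x, hxP⟩ (u := u a)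
      rw [pickUtility_cons_of_favorite_eq_some hy,
        pickUtility_cons_of_favorite_eq_some (favorite_of_subset hd (erase_subset x P) hdP),
        if_neg hji, if_neg hji, zero_add, zero_add, erase_right_comm (s := P) (a := x)]
      exact ih (favorite_of_subset hx (erase_subset d P) hxP) hy

theorem pickUtility_cons_cons_le (hji : j ≠ i) (hu : ∀ x, 0 ≤ u i x) (σ : List (Fin 2))
    (R : Finset (Fin m)) : pickUtility u i (j :: i :: σ) R ≤ pickUtility u i (i :: j :: σ) R := by
  rcases R.eq_empty_or_nonempty with rfl | hR
  · simp
  obtain ⟨c, hc⟩ := exists_favorite_eq_some hR (u := u i)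
  obtain ⟨c', hc'⟩ := exists_favorite_eq_some hR (u := u j)
  rw [pickUtility_cons_of_favorite_eq_some hc', pickUtility_cons_of_favorite_eq_some hc,
    if_neg hji, if_pos rfl, zero_add]
  rcases eq_or_ne c c' with rfl | hcc'
  · rcases (R.erase c).eq_empty_or_nonempty with hE | hE
    · rw [hE, pickUtility_empty, pickUtility_empty, add_zero]
      exact hu c
    obtain ⟨x, hx⟩ := exists_favorite_eq_some hE (u := u i)
    obtain ⟨d, hd⟩ := exists_favorite_eq_some hE (u := u j)
    rw [pickUtility_cons_of_favorite_eq_some hx, pickUtility_cons_of_favorite_eq_some hd,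
      if_pos rfl, if_neg hji, zero_add]
    exact add_le_add (le_favorite hc (mem_of_mem_erase (favorite_mem_s7 hx)))
      (pickUtility_erase_le_erase hji σ hx hd)
  · rw [pickUtility_cons_of_favorite_eq_some
        (favorite_of_subset hc (erase_subset c' R) (mem_erase.mpr ⟨hcc', favorite_mem_s7 hc⟩)),
      pickUtility_cons_of_favorite_eq_some
        (favorite_of_subset hc' (erase_subset c R) (mem_erase.mpr ⟨hcc'.symm, favorite_mem_s7 hc'⟩)),
      if_pos rfl, if_neg hji, zero_add, erase_right_comm]

theorem pickUtility_le_cons_erase (hji : j ≠ i) (hu : ∀ x, 0 ≤ u i x) (τ : List (Fin 2))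
    (R : Finset (Fin m)) : pickUtility u i τ R ≤ pickUtility u i (i :: τ.erase i) R := by
  induction τ generalizing R with
  | nil => exact pickUtility_nonneg hu _ _
  | cons a τ ih =>
    rcases Fin.two_eq_or_eq_of_ne hji a with rfl | rfl
    · rw [List.erase_cons_head]
    · rw [List.erase_cons_tail (by simpa using hji)]
      exact (pickUtility_cons_le_cons ih a R).trans (pickUtility_cons_cons_le hji hu _ R)

theorem pickUtility_le_of_count_take_le (hji : j ≠ i) (hu : ∀ x, 0 ≤ u i x)
    {τ τ' : List (Fin 2)} (h : ∀ k, (τ.take k).count i ≤ (τ'.take k).count i)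
    (R : Finset (Fin m)) : pickUtility u i τ R ≤ pickUtility u i τ' R := by
  induction τ' generalizing τ R with
  | nil =>
    have hi : i ∉ τ := List.count_eq_zero.mp (by simpa using h τ.length)
    rw [pickUtility_eq_zero_of_notMem hi]
    rfl
  | cons b τ' ih =>
    rcases Fin.two_eq_or_eq_of_ne hji b with rfl | rfl
    · refine (pickUtility_le_cons_erase hji hu τ R).trans
        (pickUtility_cons_le_cons (ih fun k => ?_) _ R)
      have := h (k + 1)
      rw [List.count_take_erase]
      simp only [List.take_succ_cons, List.count_cons_self] at this
      omega
    · rcases τ with - | ⟨a, τ⟩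
      · exact pickUtility_nonneg hu _ _
      obtain rfl : a = b := by
        refine (Fin.two_eq_or_eq_of_ne hji a).resolve_left fun hai => ?_
        simpa [hai, hji] using h 1
      exact pickUtility_cons_le_cons (ih fun k => by simpa [List.count_cons] using h (k + 1)) a R

end TwoAgents

section Monotonicity

variable {f : ℕ → ℝ}

theorem IsDivisorSeq.resource_monotone {n m : ℕ} {w : Fin n → ℝ} {π π' : List (Fin n)}
    (hs : IsDivisorSeq f w π) (hs' : IsDivisorSeq f w π') (hlen : π.length ≤ π'.length)
    (u : Fin n → Fin (m + 1) → ℝ) {i : Fin n} (hu : ∀ x, 0 ≤ u i x) :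
    ∑ x ∈ allocate (fun a (y : Fin m) => u a y.castSucc) π i, u i x.castSucc ≤
      ∑ x ∈ allocate u π' i, u i x :=
  calc ∑ x ∈ allocate (fun a (y : Fin m) => u a y.castSucc) π i, u i x.castSucc
      = pickUtility u i π (univ.map Fin.castSuccOrderEmb.toEmbedding) := by
        rw [sum_allocate_eq_pickUtility (fun a (y : Fin m) => u a y.castSucc)]
        exact pickUtility_comp_orderEmbedding u Fin.castSuccOrderEmb i π univ
    _ ≤ pickUtility u i π univ := by
        rw [Fin.univ_castSuccEmb m, cons_eq_insert]
        refine pickUtility_le_insert hu π fun hlast => ?_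
        obtain ⟨x, -, hx⟩ := mem_map.mp hlast
        exact Fin.castSucc_ne_last x hx
    _ ≤ pickUtility u i π' univ := pickUtility_le_of_isPrefix hu (hs.isPrefix hs' hlen) univ
    _ = ∑ x ∈ allocate u π' i, u i x := (sum_allocate_eq_pickUtility u π' i).symm

theorem IsDivisorSeq.population_monotone {n m : ℕ} {w : Fin (n + 1) → ℝ} {π : List (Fin n)}
    {π' : List (Fin (n + 1))} (hs : IsDivisorSeq f (fun a => w a.castSucc) π)
    (hs' : IsDivisorSeq f w π') (hlen : π'.length ≤ π.length) (u : Fin (n + 1) → Fin m → ℝ)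
    {i : Fin n} (hu : ∀ x, 0 ≤ u i.castSucc x) :
    ∑ x ∈ allocate u π' i.castSucc, u i.castSucc x ≤
      ∑ x ∈ allocate (fun a y => u a.castSucc y) π i, u i.castSucc x :=
  calc ∑ x ∈ allocate u π' i.castSucc, u i.castSucc x
      = pickUtility u i.castSucc π' univ := sum_allocate_eq_pickUtility u π' i.castSucc
    _ ≤ pickUtility u i.castSucc (π'.filter (· ≠ Fin.last n)) univ :=
        pickUtility_le_filter hu (by simp [Fin.castSucc_ne_last]) π' subset_rfl
    _ ≤ pickUtility u i.castSucc (π.map Fin.castSucc) univ :=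
        pickUtility_le_of_isPrefix hu (hs.filter_ne_last_isPrefix hs' hlen) univ
    _ = pickUtility (fun a => u a.castSucc) i π univ :=
        (pickUtility_comp_injective u (Fin.castSucc_injective n) i π univ).symm
    _ = ∑ x ∈ allocate (fun a y => u a.castSucc y) π i, u i.castSucc x :=
        (sum_allocate_eq_pickUtility _ π i).symm

theorem IsDivisorSeq.weight_monotone_of_two (hf : ∀ t, 0 ≤ f t) {m : ℕ} {w w' : Fin 2 → ℝ}
    {i : Fin 2} (hw : 0 < w i) (hwi : w i ≤ w' i) (hwj : ∀ j, j ≠ i → w' j = w j)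
    {π π' : List (Fin 2)} (hs : IsDivisorSeq f w π) (hs' : IsDivisorSeq f w' π')
    (hlen : π.length = π'.length) (u : Fin 2 → Fin m → ℝ) (hu : ∀ x, 0 ≤ u i x) :
    ∑ x ∈ allocate u π i, u i x ≤ ∑ x ∈ allocate u π' i, u i x := by
  obtain ⟨j, hji⟩ : ∃ j : Fin 2, j ≠ i := ⟨i + 1, by omega⟩
  rw [sum_allocate_eq_pickUtility, sum_allocate_eq_pickUtility]
  exact pickUtility_le_of_count_take_le hji hu
    (hs.count_take_le hf hji hw hwi (hwj j hji) hs' hlen) univ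

end Monotonicity

/-- Every divisor method satisfies resource-monotonicity and
population-monotonicity; moreover, for two agents, every divisor method satisfies
weight-monotonicity. -/
theorem divisor_methods_monotone (f : ℕ → ℝ) (hf : IsDivisorFn f) :
    -- resource-monotonicity
    (∀ (n m : ℕ) (w : Fin n → ℝ), (∀ i, 0 < w i) →
      ∀ (π π' : List (Fin n)), π.length = m → π'.length = m + 1 →
        IsDivisorSeq f w π → IsDivisorSeq f w π' →
        ∀ u : Fin n → Fin (m + 1) → ℝ, (∀ i j, 0 ≤ u i j) →
        ∀ i : Fin n,
          (∑ x ∈ allocate (fun a (y : Fin m) => u a y.castSucc) π i, u i x.castSucc) ≤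
            ∑ x ∈ allocate u π' i, u i x) ∧
    -- population-monotonicity
    (∀ (n m : ℕ) (w : Fin (n + 1) → ℝ), (∀ i, 0 < w i) →
      ∀ (π : List (Fin n)) (π' : List (Fin (n + 1))), π.length = m → π'.length = m →
        IsDivisorSeq f (fun i : Fin n => w i.castSucc) π → IsDivisorSeq f w π' →
        ∀ u : Fin (n + 1) → Fin m → ℝ, (∀ i j, 0 ≤ u i j) →
        ∀ i : Fin n,
          (∑ x ∈ allocate u π' i.castSucc, u i.castSucc x) ≤
            ∑ x ∈ allocate (fun a y => u a.castSucc y) π i, u i.castSucc x) ∧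
    -- weight-monotonicity for two agents
    (∀ (m : ℕ) (w w' : Fin 2 → ℝ), (∀ i, 0 < w i) →
      ∀ i : Fin 2, w i < w' i → (∀ j, j ≠ i → w' j = w j) →
      ∀ (π π' : List (Fin 2)), π.length = m → π'.length = m →
        IsDivisorSeq f w π → IsDivisorSeq f w' π' →
        ∀ u : Fin 2 → Fin m → ℝ, (∀ a b, 0 ≤ u a b) →
          (∑ x ∈ allocate u π i, u i x) ≤ ∑ x ∈ allocate u π' i, u i x) := by
  have hf₀ : ∀ t, 0 ≤ f t := fun t => (Nat.cast_nonneg t).trans (hf.2 t).1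
  refine ⟨?_, ?_, ?_⟩
  · intro n m w _ π π' hπ hπ' hs hs' u hu i
    exact hs.resource_monotone hs' (by omega) u (hu i)
  · intro n m w _ π π' hπ hπ' hs hs' u hu i
    exact hs.population_monotone hs' (by omega) u (hu i.castSucc)
  · intro m w w' hw i hwi hwj π π' hπ hπ' hs hs' u hu
    exact hs.weight_monotone_of_two hf₀ (hw i) hwi.le hwj hs' (hπ.trans hπ'.symm) u (hu i)
end

section
/- Among all divisor methods, Adams' method (f(t) = t for all t) is the only one satisfying weighted envy-freeness up to one item (WEF1): a divisor method with function f produces a WEF1 allocation for every instance (every number of agents and items, weights, and additive utilities) if and only if f(t) = t for all t ∈ ℤ≥0. -/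
/-!
For `f t = t`, fix agents `i ≠ j` with `tᵢ`, `tⱼ` picks so far, let `Sᵢ` be `i`'s value for her
bundle and `Sⱼ` her value for `j`'s bundle without its first item. Adams' rule keeps
`wᵢ (tⱼ - 1) ≤ wⱼ tᵢ`, and every pick preserves `wᵢ Sⱼ + (wⱼ tᵢ - wᵢ (tⱼ - 1)) ρ ≤ wⱼ Sᵢ` for some
upper bound `ρ` of `i`'s values of the remaining items: when `i` picks, `ρ` drops to the value of
her favourite item, which both sides gain `wⱼ` times; when `j` picks again, the slack drops by `wᵢ`
while `wᵢ Sⱼ` grows by at most `wᵢ ρ`. At the end the slack term is nonnegative, which is WEF1.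

If `f t₀ > t₀`, give agents `0, 1` weights `1, N` with `N (f t₀ - t₀) > t₀ + 2` and unit
utilities: in the first `N t₀ + t₀ + 2` turns agent `0` never gets a `(t₀ + 1)`-st item, so
agent `1` gets at least `N t₀ + 2` items and `0` envies her beyond one item.
-/

open Finset

/-- Weighted envy-freeness up to one item. -/
def isWEF1 {n m : ℕ} (w : Fin n → ℝ) (u : Fin n → Fin m → ℝ)
    (M : Fin n → Finset (Fin m)) : Prop :=
  ∀ i j : Fin n, ∃ B ⊆ M j, B.card ≤ 1 ∧
    (∑ x ∈ M j \ B, u i x) / w j ≤ (∑ x ∈ M i, u i x) / w i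

variable {n m : ℕ}

lemma favorite_spec (u : Fin m → ℝ) {R : Finset (Fin m)} (hR : R.Nonempty) :
    ∃ x ∈ R, favorite u R = some x ∧ ∀ y ∈ R, u y ≤ u x := by
  obtain ⟨b, hb, hmax⟩ := R.exists_max_image u hR
  have hne : (R.filter fun j => ∀ j' ∈ R, u j' ≤ u j).Nonempty := ⟨b, mem_filter.2 ⟨hb, hmax⟩⟩
  obtain ⟨hmem, hge⟩ := mem_filter.1 (min'_mem _ hne)
  exact ⟨_, hmem, by rw [favorite, dif_pos hne], hge⟩

lemma pickStep_of_nonempty (u : Fin n → Fin m → ℝ) {R : Finset (Fin m)} (hR : R.Nonempty)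
    (M : Fin n → Finset (Fin m)) (a : Fin n) :
    ∃ x ∈ R, (∀ y ∈ R, u a y ≤ u a x) ∧
      pickStep u (R, M) a = (R.erase x, Function.update M a (insert x (M a))) := by
  obtain ⟨x, hx, hfav, hmax⟩ := favorite_spec (u a) hR
  exact ⟨x, hx, hmax, by simp only [pickStep, hfav]⟩

noncomputable def pickState (u : Fin n → Fin m → ℝ) (l : List (Fin n)) :
    Finset (Fin m) × (Fin n → Finset (Fin m)) :=
  l.foldl (pickStep u) (univ, fun _ => ∅)

section pickState

variable (u : Fin n → Fin m → ℝ)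

lemma allocate_eq_pickState (π : List (Fin n)) : allocate u π = (pickState u π).2 := rfl

lemma pickState_nil : pickState u [] = (univ, fun _ => ∅) := rfl

lemma pickState_append_singleton (l : List (Fin n)) (a : Fin n) :
    pickState u (l ++ [a]) = pickStep u (pickState u l) a := by
  simp only [pickState, List.foldl_append, List.foldl_cons, List.foldl_nil]

lemma pickState_wf {l : List (Fin n)} (hl : l.length ≤ m) :
    #(pickState u l).1 = m - l.length ∧
      ∀ a, Disjoint (pickState u l).1 ((pickState u l).2 a) ∧
        #((pickState u l).2 a) = l.count a := by
  induction l using List.reverseRecOn with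
  | nil => simp [pickState_nil]
  | append_singleton l b ih =>
    simp only [List.length_append, List.length_singleton] at hl
    obtain ⟨hcard, hM⟩ := ih (by omega)
    have hR : (pickState u l).1.Nonempty := by rw [← card_pos, hcard]; omega
    obtain ⟨x, hx, -, hstep⟩ := pickStep_of_nonempty u hR (pickState u l).2 b
    rw [pickState_append_singleton, hstep]
    refine ⟨by simp [card_erase_of_mem hx, hcard]; omega, fun a => ?_⟩
    obtain ⟨hdisj, hcardM⟩ := hM a
    dsimp only
    rcases eq_or_ne a b with rfl | hab
    · have hxM : x ∉ (pickState u l).2 a := disjoint_left.1 hdisj hx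
      rw [Function.update_self, disjoint_insert_right, card_insert_of_notMem hxM, hcardM]
      exact ⟨⟨notMem_erase _ _, disjoint_of_subset_left (erase_subset _ _) hdisj⟩, by simp⟩
    · rw [Function.update_of_ne hab, hcardM]
      exact ⟨disjoint_of_subset_left (erase_subset _ _) hdisj, by simp [Ne.symm hab]⟩

lemma card_allocate {π : List (Fin n)} (hπ : π.length = m) (a : Fin n) :
    #(allocate u π a) = π.count a :=
  ((pickState_wf u hπ.le).2 a).2

end pickState

section IsDivisorSeq

variable {f : ℕ → ℝ} {w : Fin n → ℝ}

lemma isDivisorSeq_append_singleton_iff {l : List (Fin n)} {a : Fin n} :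
    IsDivisorSeq f w (l ++ [a]) ↔ IsDivisorSeq f w l ∧
      ∀ i, f (l.count a) / w a ≤ f (l.count i) / w i ∧
        (i < a → f (l.count a) / w a < f (l.count i) / w i) := by
  simp only [IsDivisorSeq, List.get_eq_getElem, List.length_append, List.length_singleton]
  constructor
  · intro h
    refine ⟨fun k hk i => ?_, fun i => ?_⟩
    · simpa only [List.take_append_of_le_length hk.le, List.getElem_append_left hk]
        using h k (by omega) i
    · simpa only [List.take_left' rfl, List.getElem_concat_length rfl] using h l.length (by omega) i
  · rintro ⟨h, hlast⟩ k hk i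
    rcases Nat.lt_or_ge k l.length with hk' | hk'
    · simpa only [List.take_append_of_le_length hk'.le, List.getElem_append_left hk']
        using h k hk' i
    · obtain rfl : k = l.length := by omega
      simpa only [List.take_left' rfl, List.getElem_concat_length rfl] using hlast i

lemma IsDivisorSeq.of_append_singleton {l : List (Fin n)} {a : Fin n}
    (h : IsDivisorSeq f w (l ++ [a])) : IsDivisorSeq f w l :=
  (isDivisorSeq_append_singleton_iff.1 h).1

lemma exists_isDivisorSeq [NeZero n] (f : ℕ → ℝ) (w : Fin n → ℝ) (m : ℕ) :
    ∃ π : List (Fin n), π.length = m ∧ IsDivisorSeq f w π := by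
  induction m with
  | zero => exact ⟨[], rfl, fun k hk => absurd hk (Nat.not_lt_zero k)⟩
  | succ m ih =>
    obtain ⟨π, hlen, hπ⟩ := ih
    set key : Fin n → ℝ := fun a => f (π.count a) / w a
    set S := univ.filter fun a => ∀ i, key a ≤ key i
    have hS : S.Nonempty := by
      obtain ⟨a, -, ha⟩ := univ.exists_min_image key univ_nonempty
      exact ⟨a, mem_filter.2 ⟨mem_univ a, fun i => ha i (mem_univ i)⟩⟩
    have hmin : ∀ i, key (S.min' hS) ≤ key i := (mem_filter.1 (S.min'_mem hS)).2
    refine ⟨π ++ [S.min' hS], by simp [hlen],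
      isDivisorSeq_append_singleton_iff.2 ⟨hπ, fun i => ⟨hmin i, fun hi => ?_⟩⟩⟩
    by_contra! hle
    have hiS : i ∈ S := mem_filter.2 ⟨mem_univ i, fun j => hle.trans (hmin j)⟩
    exact (S.min'_le i hiS).not_gt hi

/-- When `a` picks with `t` items after `k` turns, `f t / w a ≤ f tᵢ / w i ≤ (k + 1) / w i`. -/
lemma IsDivisorSeq.count_le (hf : ∀ t, f t ≤ t + 1) {π : List (Fin n)}
    (hπ : IsDivisorSeq f w π) {a i : Fin n} (hi : 0 < w i) {t : ℕ}
    (h : (π.length : ℝ) / w i < f t / w a) : π.count a ≤ t := by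
  induction π using List.reverseRecOn with
  | nil => simp
  | append_singleton l b ih =>
    obtain ⟨hl, hlast⟩ := isDivisorSeq_append_singleton_iff.1 hπ
    simp only [List.length_append, List.length_singleton, Nat.cast_add, Nat.cast_one] at h
    have hcount := ih hl (lt_of_le_of_lt (by gcongr; linarith) h)
    rcases eq_or_ne b a with rfl | hba
    · suffices l.count b ≠ t by simp; omega
      rintro rfl
      have hci : (l.count i : ℝ) ≤ l.length := by exact_mod_cast List.count_le_length
      have : f (l.count i) / w i ≤ (l.length + 1) / w i := by gcongr; linarith [hf (l.count i)]
      linarith [(hlast i).1]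
    · simpa [hba] using hcount

lemma IsDivisorSeq.count_sub_one_mul_le (hw : ∀ i, 0 < w i) {l : List (Fin n)}
    (hl : IsDivisorSeq (fun t => (t : ℝ)) w l) (i j : Fin n) :
    w i * ((l.count j - 1 : ℕ) : ℝ) ≤ w j * l.count i := by
  induction l using List.reverseRecOn with
  | nil => simp
  | append_singleton l a ih =>
    obtain ⟨hl, hlast⟩ := isDivisorSeq_append_singleton_iff.1 hl
    have hci : (l.count i : ℝ) ≤ (l ++ [a]).count i := by
      exact_mod_cast (List.sublist_append_left l [a]).count_le i
    rcases eq_or_ne a j with rfl | haj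
    · have key := (hlast i).1
      rw [div_le_div_iff₀ (hw a) (hw i)] at key
      rw [show (l ++ [a]).count a - 1 = l.count a by simp]
      nlinarith [hw a]
    · rw [show (l ++ [a]).count j = l.count j by simp [haj]]
      nlinarith [ih hl, hw j]

end IsDivisorSeq

section Adams

variable {w : Fin n → ℝ} {u : Fin n → Fin m → ℝ} {i j : Fin n}

def AdamsPotential (w : Fin n → ℝ) (u : Fin n → Fin m → ℝ) (i j : Fin n) (l : List (Fin n))
    (st : Finset (Fin m) × (Fin n → Finset (Fin m))) : Prop :=
  ∃ ρ ≥ 0, (∀ y ∈ st.1, u i y ≤ ρ) ∧ ∃ B ⊆ st.2 j, #B ≤ 1 ∧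
    w i * ∑ x ∈ st.2 j \ B, u i x + (w j * l.count i - w i * (l.count j - 1 : ℕ)) * ρ ≤
      w j * ∑ x ∈ st.2 i, u i x

lemma adamsPotential_pickState (hw : ∀ i, 0 < w i) (hu : ∀ x, 0 ≤ u i x) (hij : i ≠ j)
    {l : List (Fin n)} (hl : IsDivisorSeq (fun t => (t : ℝ)) w l) (hlm : l.length ≤ m) :
    AdamsPotential w u i j l (pickState u l) := by
  induction l using List.reverseRecOn with
  | nil =>
    exact ⟨∑ y, u i y, sum_nonneg fun y _ => hu y,
      fun y _ => single_le_sum (fun y _ => hu y) (mem_univ y), ∅, empty_subset _, by simp,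
      by simp [pickState_nil]⟩
  | append_singleton l a ih =>
    simp only [List.length_append, List.length_singleton] at hlm
    obtain ⟨ρ, hρ, hpool, B, hB, hBc, hpot⟩ := ih hl.of_append_singleton (by omega)
    obtain ⟨hcard, hM⟩ := pickState_wf u (l := l) (by omega)
    have hR : (pickState u l).1.Nonempty := by rw [← card_pos, hcard]; omega
    obtain ⟨x, hx, hmax, hstep⟩ := pickStep_of_nonempty u hR (pickState u l).2 a
    have hslack := hl.of_append_singleton.count_sub_one_mul_le hw i j
    have hslack' := hl.count_sub_one_mul_le hw i j
    rw [pickState_append_singleton, hstep]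
    set R := (pickState u l).1
    set M := (pickState u l).2
    have hxM : ∀ b, x ∉ M b := fun b => disjoint_left.1 (hM b).1 hx
    have hpool' : ∀ y ∈ R.erase x, u i y ≤ ρ := fun y hy => hpool y (mem_of_mem_erase hy)
    dsimp only [AdamsPotential]
    rcases eq_or_ne a i with rfl | hai
    · refine ⟨u a x, hu x, fun y hy => hmax y (mem_of_mem_erase hy), B, ?_, hBc, ?_⟩
      · rwa [Function.update_of_ne hij.symm]
      rw [Function.update_self, Function.update_of_ne hij.symm, sum_insert (hxM a)]
      rw [show (l ++ [a]).count j = l.count j by simp [hij],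
        show (l ++ [a]).count a = l.count a + 1 by simp]
      have := mul_le_mul_of_nonneg_left (hpool x hx) (sub_nonneg.2 hslack)
      push_cast
      linarith
    rcases eq_or_ne a j with rfl | haj
    · rw [Function.update_self, Function.update_of_ne hai.symm]
      rcases Nat.eq_zero_or_pos (l.count a) with h0 | hpos
      · have hMa : M a = ∅ := card_eq_zero.1 (by rw [(hM a).2, h0])
        refine ⟨ρ, hρ, hpool', {x}, by simp, by simp, ?_⟩
        rw [hMa, insert_empty, sdiff_self, show (l ++ [a]).count a - 1 = l.count a by simp [h0],
          show (l ++ [a]).count i = l.count i by simp [hai]]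
        simpa [hMa, h0] using hpot
      · refine ⟨ρ, hρ, hpool', B, hB.trans (subset_insert _ _), hBc, ?_⟩
        have hxB : x ∉ M a \ B := fun h => hxM a (mem_sdiff.1 h).1
        rw [insert_sdiff_of_notMem _ fun h => hxM a (hB h), sum_insert hxB,
          show (l ++ [a]).count i = l.count i by simp [hai]]
        rw [show (l ++ [a]).count a - 1 = l.count a by simp] at hslack' ⊢
        have := mul_le_mul_of_nonneg_left (hpool x hx) (hw i).le
        rw [Nat.cast_sub hpos] at hpot
        push_cast at hpot
        linarith
    · rw [Function.update_of_ne haj.symm, Function.update_of_ne hai.symm]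
      refine ⟨ρ, hρ, hpool', B, hB, hBc, ?_⟩
      simpa [hai, haj] using hpot

end Adams

theorem isWEF1_allocate_of_adams {w : Fin n → ℝ} (hw : ∀ i, 0 < w i) {π : List (Fin n)}
    (hπ : π.length = m) (hseq : IsDivisorSeq (fun t => (t : ℝ)) w π) {u : Fin n → Fin m → ℝ}
    (hu : ∀ i j, 0 ≤ u i j) : isWEF1 w u (allocate u π) := by
  intro i j
  rcases eq_or_ne i j with rfl | hij
  · exact ⟨∅, empty_subset _, by simp, by simp⟩
  obtain ⟨ρ, hρ, -, B, hB, hBc, hpot⟩ := adamsPotential_pickState hw (hu i) hij hseq hπ.le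
  have hslack := mul_nonneg (sub_nonneg.2 (hseq.count_sub_one_mul_le hw i j)) hρ
  refine ⟨B, hB, hBc, ?_⟩
  rw [allocate_eq_pickState, div_le_div_iff₀ (hw j) (hw i)]
  linarith

lemma List.count_zero_add_count_one (l : List (Fin 2)) : l.count 0 + l.count 1 = l.length := by
  simpa using Multiset.sum_count_eq_card (s := univ) (m := (l : Multiset (Fin 2))) (by simp)

lemma exists_not_isWEF1 {f : ℕ → ℝ} (hf : IsDivisorFn f) {t₀ : ℕ} (ht₀ : f t₀ ≠ t₀) :
    ∃ (m : ℕ) (w : Fin 2 → ℝ) (π : List (Fin 2)), (∀ i, 0 < w i) ∧ π.length = m ∧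
      IsDivisorSeq f w π ∧
        ¬ isWEF1 w (fun _ _ => (1 : ℝ)) (allocate (fun _ (_ : Fin m) => 1) π) := by
  have hε : 0 < f t₀ - t₀ := sub_pos.2 (lt_of_le_of_ne (hf.2 t₀).1 ht₀.symm)
  obtain ⟨N, hN⟩ := exists_nat_gt ((t₀ + 2) / (f t₀ - t₀))
  have hNpos : (0 : ℝ) < N := lt_trans (by positivity) hN
  rw [div_lt_iff₀ hε] at hN
  set m := N * t₀ + t₀ + 2
  set w : Fin 2 → ℝ := ![1, N]
  have hw : ∀ i, 0 < w i := fun i => by fin_cases i <;> simp [w, hNpos]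
  obtain ⟨π, hπ, hseq⟩ := exists_isDivisorSeq f w m
  refine ⟨m, w, π, hw, hπ, hseq, fun hwef1 => ?_⟩
  have h0 : π.count 0 ≤ t₀ := by
    refine hseq.count_le (fun t => (hf.2 t).2) (i := 1) (hw 1) ?_
    simp only [hπ, w, m, Matrix.cons_val_zero, Matrix.cons_val_one, div_one]
    rw [div_lt_iff₀ hNpos]
    push_cast
    linarith
  obtain ⟨B, hB, hBc, hle⟩ := hwef1 0 1
  simp only [sum_const, nsmul_eq_mul, mul_one, card_sdiff_of_subset hB, card_allocate _ hπ] at hle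
  simp only [w, Matrix.cons_val_zero, Matrix.cons_val_one, div_one] at hle
  rw [div_le_iff₀ hNpos] at hle
  have hcount : N * t₀ + 1 ≤ π.count 1 - #B := by
    have := π.count_zero_add_count_one
    simp only [hπ, m] at this
    omega
  have h0' : (π.count 0 : ℝ) * N ≤ t₀ * N := by gcongr
  have hcount' : (N * t₀ + 1 : ℝ) ≤ (π.count 1 - #B : ℕ) := by exact_mod_cast hcount
  linarith

/-- Among all divisor methods, Adams' method (`f t = t`) is the only
one satisfying WEF1: a divisor method with function `f` produces a WEF1 allocation
for every instance if and only if `f t = t` for all `t`. -/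
theorem adams_unique_WEF1 (f : ℕ → ℝ) (hf : IsDivisorFn f) :
    (∀ (n m : ℕ) (w : Fin n → ℝ), (∀ i, 0 < w i) →
      ∀ π : List (Fin n), π.length = m → IsDivisorSeq f w π →
      ∀ u : Fin n → Fin m → ℝ, (∀ i j, 0 ≤ u i j) →
        isWEF1 w u (allocate u π)) ↔
      ∀ t : ℕ, f t = t := by
  constructor
  · intro H t
    by_contra ht
    obtain ⟨m, w, π, hw, hπ, hseq, hwef1⟩ := exists_not_isWEF1 hf ht
    exact hwef1 (H 2 m w hw π hπ hseq _ fun _ _ => zero_le_one)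
  · intro hid n m w hw π hπ hseq u hu
    obtain rfl : f = fun t : ℕ => (t : ℝ) := funext hid
    exact isWEF1_allocate_of_adams hw hπ hseq hu
end
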